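/- Let α = (3+√5)/2 and for each natural number n ≥ 2 let α_n denote the unique real root of P_{2n}(x) = x^(2n) − x^(n+1) − x^n − x^(n−1) + 1 in (2^(1/n), 3^(1/n)) (which equals the house of P_{2n}). Then the sequence (α_n)^(2n) converges to α^2 = (7+3√5)/2 = 6.854... as n tends to infinity. Moreover, α^2 < (α_n)^(2n) < α^(2n/(n−1)) for all sufficiently large n. -/

import Mathlib

/-!
Dividing `x ^ (2n) - x ^ (n+1) - x ^ n - x ^ (n-1) + 1 = 0` by `x ^ n` shows that `t = x ^ n`
satisfies `t + t⁻¹ = x + 1 + x⁻¹`. The map `u ↦ u + u⁻¹` is increasing on `[1, ∞)`, and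
`α + α⁻¹ = 3`; for `x > 1` one has `3 < x + 1 + x⁻¹ < α x + (α x)⁻¹`, hence `α < x ^ n < α x`.
The left inequality gives `α² < x ^ (2n)`, the right one `x ^ (n-1) < α`, i.e.
`x ^ (2n) < α ^ (2n/(n-1))`; as `2n/(n-1) → 2`, the limit follows by squeezing.
-/

open Real Filter Topology

theorem strictMonoOn_add_inv : StrictMonoOn (fun u : ℝ => u + u⁻¹) (Set.Ici 1) := by
  intro u (hu : 1 ≤ u) v (hv : 1 ≤ v) huv
  have key : v + v⁻¹ - (u + u⁻¹) = (v - u) * (u * v - 1) / (u * v) := by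
    field_simp
    ring
  have : 0 < (v - u) * (u * v - 1) / (u * v) :=
    div_pos (mul_pos (by linarith) (by nlinarith)) (by positivity)
  show u + u⁻¹ < v + v⁻¹
  linarith

theorem three_lt_add_one_add_inv {x : ℝ} (hx : 0 < x) (hx₁ : x ≠ 1) : 3 < x + 1 + x⁻¹ := by
  have key : x + 1 + x⁻¹ - 3 = (x - 1) ^ 2 / x := by
    field_simp
    ring
  have : 0 < (x - 1) ^ 2 / x := div_pos (pow_two_pos_of_ne_zero (sub_ne_zero.2 hx₁)) hx
  linarith

theorem add_one_add_inv_lt_mul_add_inv {α x : ℝ} (hα₁ : 1 < α) (hα₃ : α + α⁻¹ = 3)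
    (hx : 1 < x) : x + 1 + x⁻¹ < α * x + (α * x)⁻¹ := by
  have hα : α ^ 2 - 3 * α + 1 = 0 := by
    field_simp at hα₃
    linear_combination hα₃
  have hα₃₂ : 3 / 2 < α := by nlinarith
  have key : α * x + (α * x)⁻¹ - (x + 1 + x⁻¹) = (x - 1) * ((α - 1) * x + α - 2) / x := by
    field_simp
    linear_combination hα
  have : 0 < (x - 1) * ((α - 1) * x + α - 2) / x :=
    div_pos (mul_pos (by linarith) (by nlinarith)) (by positivity)
  linarith

theorem pow_add_inv_pow_eq_of_eq_zero {x : ℝ} {n : ℕ} (hx : x ≠ 0) (hn : 1 ≤ n)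
    (h : x ^ (2 * n) - x ^ (n + 1) - x ^ n - x ^ (n - 1) + 1 = 0) :
    x ^ n + (x ^ n)⁻¹ = x + 1 + x⁻¹ := by
  obtain ⟨m, rfl⟩ := Nat.exists_eq_add_of_le' hn
  simp only [Nat.add_sub_cancel] at h
  field_simp
  linear_combination x * h

theorem pow_mem_Ioo_of_eq_zero {α x : ℝ} {n : ℕ} (hα₁ : 1 < α) (hα₃ : α + α⁻¹ = 3)
    (hn : 1 ≤ n) (hx : 1 < x)
    (h : x ^ (2 * n) - x ^ (n + 1) - x ^ n - x ^ (n - 1) + 1 = 0) :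
    x ^ n ∈ Set.Ioo α (α * x) := by
  have ht : x ^ n + (x ^ n)⁻¹ = x + 1 + x⁻¹ :=
    pow_add_inv_pow_eq_of_eq_zero (by positivity) hn h
  have ht₁ : x ^ n ∈ Set.Ici 1 := one_le_pow₀ hx.le
  have hαx₁ : α * x ∈ Set.Ici 1 := one_le_mul_of_one_le_of_one_le hα₁.le hx.le
  constructor
  · refine (strictMonoOn_add_inv.lt_iff_lt (Set.mem_Ici.2 hα₁.le) ht₁).1 ?_
    simpa only [hα₃, ht] using three_lt_add_one_add_inv (by positivity) hx.ne'
  · refine (strictMonoOn_add_inv.lt_iff_lt ht₁ hαx₁).1 ?_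
    simpa only [ht] using add_one_add_inv_lt_mul_add_inv hα₁ hα₃ hx

theorem pow_two_mul_lt_rpow_of_pow_lt_mul {α x : ℝ} {n : ℕ} (hn : 2 ≤ n) (hx : 0 < x)
    (h : x ^ n < α * x) : x ^ (2 * n) < α ^ (2 * (n : ℝ) / ((n : ℝ) - 1)) := by
  obtain ⟨m, rfl⟩ := Nat.exists_eq_add_of_le' (one_le_two.trans hn)
  have hm : (0 : ℝ) < m := by exact_mod_cast (show 0 < m by omega)
  have hxm : x ^ m < α := by
    rw [pow_succ] at h
    exact lt_of_mul_lt_mul_right h hx.le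
  push_cast
  rw [add_sub_cancel_right]
  have hpow : x ^ (2 * (m + 1)) = (x ^ m) ^ (2 * ((m : ℝ) + 1) / m) := by
    rw [← rpow_natCast x m, ← rpow_mul hx.le, ← rpow_natCast]
    congr 1
    push_cast
    field_simp
  rw [hpow]
  exact rpow_lt_rpow (by positivity) hxm (by positivity)

theorem tendsto_rpow_two_mul_div_sub_one {α : ℝ} (hα : α ≠ 0) :
    Tendsto (fun n : ℕ => α ^ (2 * (n : ℝ) / ((n : ℝ) - 1))) atTop (𝓝 (α ^ 2)) := by
  have hexp : Tendsto (fun n : ℕ => 2 * (n : ℝ) / ((n : ℝ) - 1)) atTop (𝓝 2) := by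
    simpa [mul_div_assoc, sub_eq_add_neg] using
      (tendsto_natCast_div_add_atTop (-1 : ℝ)).const_mul 2
  rw [← rpow_two]
  exact (continuousAt_const_rpow hα).tendsto.comp hexp

theorem one_lt_three_add_sqrt_five_div_two : 1 < (3 + √5) / 2 := by
  have := sqrt_nonneg 5
  linarith

theorem three_add_sqrt_five_div_two_add_inv : (3 + √5) / 2 + ((3 + √5) / 2)⁻¹ = 3 := by
  have h5 : √5 ^ 2 = 5 := sq_sqrt (by norm_num)
  field_simp
  linear_combination h5

/-- Theorem 2: the house of `P_{2n}` raised to the `2n`-th power tends to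
`α² = (7+3√5)/2 = 6.854…`, where `α = (3+√5)/2`; moreover
`α² < α_n^{2n} < α^{2n/(n−1)}` for all sufficiently large `n`. -/
theorem house_P2n_pow_tendsto (a : ℕ → ℝ)
    (ha : ∀ n : ℕ, 2 ≤ n →
      a n ∈ Set.Ioo ((2 : ℝ) ^ ((1 : ℝ) / (n : ℝ))) ((3 : ℝ) ^ ((1 : ℝ) / (n : ℝ))) ∧
      (a n) ^ (2 * n) - (a n) ^ (n + 1) - (a n) ^ n - (a n) ^ (n - 1) + 1 = 0) :
    Filter.Tendsto (fun n : ℕ => (a n) ^ (2 * n)) Filter.atTop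
      (nhds (((3 + Real.sqrt 5) / 2) ^ 2)) ∧
    ((3 + Real.sqrt 5) / 2) ^ 2 = (7 + 3 * Real.sqrt 5) / 2 ∧
    (∀ᶠ n : ℕ in Filter.atTop,
      ((3 + Real.sqrt 5) / 2) ^ 2 < (a n) ^ (2 * n) ∧
      (a n) ^ (2 * n) < ((3 + Real.sqrt 5) / 2) ^ ((2 * (n : ℝ)) / ((n : ℝ) - 1))) := by
  have hα₁ := one_lt_three_add_sqrt_five_div_two
  have bounds : ∀ᶠ n : ℕ in atTop, ((3 + √5) / 2) ^ 2 < a n ^ (2 * n) ∧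
      a n ^ (2 * n) < ((3 + √5) / 2) ^ (2 * (n : ℝ) / ((n : ℝ) - 1)) := by
    filter_upwards [eventually_ge_atTop 2] with n hn
    obtain ⟨⟨h2, -⟩, hroot⟩ := ha n hn
    have hx : 1 < a n := (one_lt_rpow one_lt_two (by positivity)).trans h2
    obtain ⟨hlo, hhi⟩ :=
      pow_mem_Ioo_of_eq_zero hα₁ three_add_sqrt_five_div_two_add_inv (by omega) hx hroot
    refine ⟨?_, pow_two_mul_lt_rpow_of_pow_lt_mul hn (by positivity) hhi⟩
    rw [pow_mul']
    exact pow_lt_pow_left₀ hlo (by positivity) two_ne_zero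
  refine ⟨tendsto_of_tendsto_of_tendsto_of_le_of_le' tendsto_const_nhds
    (tendsto_rpow_two_mul_div_sub_one (by positivity))
    (bounds.mono fun _ h => h.1.le) (bounds.mono fun _ h => h.2.le), ?_, bounds⟩
  have h5 : √5 ^ 2 = 5 := sq_sqrt (by norm_num)
  linear_combination h5 / 4
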